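/- arXiv:2103.01477 — 4 statements merged into one kernel-verified Lean document; each statement's English description precedes it below -/
import Mathlib

section
/- The 28 matrices consisting of {I_α : 1 ≤ α ≤ 7} together with {I_α I_β : 1 ≤ α < β ≤ 7} are linearly independent in the space M₈(ℝ) of real 8×8 matrices. -/
open scoped BigOperators
open Matrix

noncomputable section

namespace OC

/-- Octonions, identified with ℝ⁸. -/
abbrev Octo : Type := Fin 8 → ℝ

/-- The seven positively-oriented triples Ω. -/
def OmegaT : List (Fin 8 × Fin 8 × Fin 8) :=
  [(1,2,3),(2,4,6),(4,3,5),(3,6,7),(6,5,1),(5,7,2),(7,1,4)]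

/-- The six permutations of a triple, with their signs. -/
def signedPerms3 (t : Fin 8 × Fin 8 × Fin 8) : List (ℝ × (Fin 8 × Fin 8 × Fin 8)) :=
  [(1,(t.1,t.2.1,t.2.2)), (1,(t.2.1,t.2.2,t.1)), (1,(t.2.2,t.1,t.2.1)),
   (-1,(t.2.1,t.1,t.2.2)), (-1,(t.1,t.2.2,t.2.1)), (-1,(t.2.2,t.2.1,t.1))]

/-- The totally antisymmetric symbol ε with ε(α,β,γ) = 1 on Ω and vanishing on triples
that are not permutations of a triple of Ω. -/
def eps (a b c : Fin 8) : ℝ :=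
  (((OmegaT.map signedPerms3).flatten).map (fun p => if p.2 = (a,b,c) then p.1 else 0)).sum

/-- Coefficient of `e d` in the product `e a * e b`: `e 0` is a two-sided unit and
`e α * e β = -δ_{αβ} e 0 + ∑ γ, ε(α,β,γ) e γ` for imaginary indices. -/
def mulCoef (a b d : Fin 8) : ℝ :=
  if a = 0 then (if d = b then 1 else 0)
  else if b = 0 then (if d = a then 1 else 0)
  else (if a = b ∧ d = 0 then -1 else 0) + eps a b d

/-- Octonion multiplication on ℝ⁸. -/
def omul (x y : Octo) : Octo := fun d => ∑ a, ∑ b, x a * y b * mulCoef a b d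

/-- The standard basis octonions e₀,…,e₇. -/
def e (a : Fin 8) : Octo := fun d => if d = a then 1 else 0

/-- Real part. -/
def reO (x : Octo) : ℝ := x 0

/-- Imaginary part. -/
def imO (x : Octo) : Octo := fun d => if d = 0 then 0 else x d

/-- Octonion conjugation. -/
def conjO (x : Octo) : Octo := fun d => if d = 0 then x 0 else -x d

/-- Squared Euclidean norm |x|². -/
def normSq (x : Octo) : ℝ := ∑ a, (x a)^2

/-- Inverse of a nonzero octonion, q⁻¹ = q̄ / |q|². -/
def oinv (q : Octo) : Octo := (normSq q)⁻¹ • conjO q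

/-- The seven quadruples Λ. -/
def LambdaT : List (Fin 8 × Fin 8 × Fin 8 × Fin 8) :=
  [(5,4,6,7),(7,3,5,1),(1,6,7,2),(2,5,1,4),(4,7,2,3),(3,1,4,6),(6,2,5,3)]

/-- The 24 permutations of a quadruple, with their signs. -/
def signedPerms4 (t : Fin 8 × Fin 8 × Fin 8 × Fin 8) :
    List (ℝ × (Fin 8 × Fin 8 × Fin 8 × Fin 8)) :=
  let a := t.1; let b := t.2.1; let c := t.2.2.1; let d := t.2.2.2
  [ (1,(a,b,c,d)), (-1,(a,b,d,c)), (-1,(a,c,b,d)), (1,(a,c,d,b)), (1,(a,d,b,c)), (-1,(a,d,c,b)),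
    (-1,(b,a,c,d)), (1,(b,a,d,c)), (1,(b,c,a,d)), (-1,(b,c,d,a)), (-1,(b,d,a,c)), (1,(b,d,c,a)),
    (1,(c,a,b,d)), (-1,(c,a,d,b)), (-1,(c,b,a,d)), (1,(c,b,d,a)), (1,(c,d,a,b)), (-1,(c,d,b,a)),
    (-1,(d,a,b,c)), (1,(d,a,c,b)), (1,(d,b,a,c)), (-1,(d,b,c,a)), (-1,(d,c,a,b)), (1,(d,c,b,a)) ]

/-- The totally antisymmetric symbol ε₄ with value 1 on Λ and vanishing on quadruples
that are not permutations of a quadruple of Λ. -/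
def eps4 (a b c d : Fin 8) : ℝ :=
  (((LambdaT.map signedPerms4).flatten).map (fun p => if p.2 = (a,b,c,d) then p.1 else 0)).sum

/-- Matrix of left multiplication by `e a`: `(Imat a) d c` is the coefficient of `e d` in
`e a * e c`. -/
def Imat (a : Fin 8) : Matrix (Fin 8) (Fin 8) ℝ := Matrix.of fun d c => mulCoef a c d

/-- Octonionic Heisenberg group multiplication on 𝕆 × Im 𝕆 (realized inside 𝕆 × 𝕆):
`(x,t)·(y,s) = (x+y, t+s+2 Im(x ȳ))`. -/
def hmul (p q : Octo × Octo) : Octo × Octo :=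
  (p.1 + q.1, p.2 + q.2 + (2:ℝ) • imO (omul p.1 (conjO q.1)))

/-- Group inverse in the octonionic Heisenberg group. -/
def hinv (p : Octo × Octo) : Octo × Octo := (-p.1, -p.2)

/-- Homogeneous norm ‖(x,t)‖ = (|x|⁴+|t|²)^{1/4}. -/
def hnorm (p : Octo × Octo) : ℝ := ((normSq p.1)^2 + normSq p.2) ^ ((1:ℝ)/4)

/-- The inversion R(x,t) = (−((|x|²e₀ − t)⁻¹)x, −t/(|x|⁴+|t|²)). -/
def Rmap (p : Octo × Octo) : Octo × Octo :=
  (-(omul (oinv (normSq p.1 • e 0 - p.2)) p.1),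
   -(((normSq p.1)^2 + normSq p.2)⁻¹ • p.2))

/-- E^β = I_β for β ∈ {1,…,7}, indexed here by `Fin 7` via `β ↦ β+1`. -/
def E7 (β : Fin 7) : Matrix (Fin 8) (Fin 8) ℝ := Imat β.succ

/-- Octonionic Heisenberg group multiplication in ℝ⁸ × ℝ⁷ coordinates. -/
def hmulC (p q : (Fin 8 → ℝ) × (Fin 7 → ℝ)) : (Fin 8 → ℝ) × (Fin 7 → ℝ) :=
  (p.1 + q.1, fun β => p.2 β + q.2 β + 2 * ∑ a, ∑ b, E7 β a b * p.1 a * q.1 b)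

/-- The left-invariant horizontal vector fields
`X_a = ∂/∂x_a + 2 ∑_{β,b} (E^β)_{ba} x_b ∂/∂t_β`. -/
def Xop (a : Fin 8) (f : ((Fin 8 → ℝ) × (Fin 7 → ℝ)) → ℝ)
    (p : (Fin 8 → ℝ) × (Fin 7 → ℝ)) : ℝ :=
  fderiv ℝ f p ((Pi.single a 1 : Fin 8 → ℝ), (0 : Fin 7 → ℝ))
    + 2 * ∑ β : Fin 7, ∑ b : Fin 8,
        E7 β b a * p.1 b * fderiv ℝ f p ((0 : Fin 8 → ℝ), (Pi.single β 1 : Fin 7 → ℝ))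

/-- ρ(x,t) = |x|⁴ + |t|². -/
def rho (p : (Fin 8 → ℝ) × (Fin 7 → ℝ)) : ℝ :=
  (∑ a, (p.1 a)^2)^2 + ∑ β, (p.2 β)^2

end OC

/-!
Each `I_a` is a monomial (signed permutation) matrix, since `e_a e_c = ± e_{a·c}`; hence so are
the products `I_α I_β`. The Frobenius inner product of two monomial matrices is a sum of eight
signs, and computing these shows that the Gram matrix of the 28 matrices is `8 • 1`.
-/

namespace Matrix

variable {K ι l m n : Type*}

def monomial [DecidableEq m] [Zero K] (σ : n → m) (s : n → K) : Matrix m n K :=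
  of fun d c => if d = σ c then s c else 0

theorem monomial_mul_monomial [DecidableEq l] [DecidableEq m] [Fintype m]
    [NonUnitalNonAssocSemiring K] (σ : m → l) (s : m → K) (τ : n → m) (t : n → K) :
    monomial σ s * monomial τ t = monomial (σ ∘ τ) fun c => s (τ c) * t c := by
  ext d c
  simp [monomial, mul_apply, ite_mul, mul_ite]

theorem sum_monomial_mul_monomial [DecidableEq m] [Fintype m] [Fintype n]
    [NonUnitalNonAssocSemiring K] (σ τ : n → m) (s t : n → K) :
    ∑ d, ∑ c, monomial σ s d c * monomial τ t d c =
      ∑ c, if σ c = τ c then s c * t c else 0 := by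
  rw [Finset.sum_comm]
  refine Finset.sum_congr rfl fun c _ => ?_
  simp [monomial, ite_mul, mul_ite, eq_comm]

def frobeniusForm (K m n : Type*) [CommSemiring K] [Fintype m] [Fintype n] :
    LinearMap.BilinForm K (Matrix m n K) :=
  LinearMap.mk₂ K (fun A B => ∑ d, ∑ c, A d c * B d c)
    (fun _ _ _ => by simp [add_mul, Finset.sum_add_distrib])
    (fun _ _ _ => by simp [Finset.mul_sum, mul_assoc])
    (fun _ _ _ => by simp [mul_add, Finset.sum_add_distrib])
    (fun _ _ _ => by simp [Finset.mul_sum, mul_left_comm])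

theorem linearIndependent_monomial [Field K] [DecidableEq ι] [DecidableEq m] [Fintype m]
    [Fintype n] {σ : ι → n → m} {s : ι → n → K} {r : K} (hr : r ≠ 0)
    (hgram : ∀ i j, ∑ c, (if σ i c = σ j c then s i c * s j c else 0) = if i = j then r else 0) :
    LinearIndependent K fun i => monomial (σ i) (s i) := by
  have hform : ∀ i j, frobeniusForm K m n (monomial (σ i) (s i)) (monomial (σ j) (s j)) =
      if i = j then r else 0 := fun i j => (sum_monomial_mul_monomial _ _ _ _).trans (hgram i j)
  refine LinearMap.BilinForm.linearIndependent_of_iIsOrtho (B := frobeniusForm K m n)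
    (fun i j hij => ?_) fun i => ?_
  · simpa [hij] using hform i j
  · rwa [hform, if_pos rfl]

end Matrix

namespace OC

/-! Integer copies of `signedPerms3`, `eps` and `mulCoef`, which the kernel can evaluate. -/

def signedPerms3Z (t : Fin 8 × Fin 8 × Fin 8) : List (ℤ × (Fin 8 × Fin 8 × Fin 8)) :=
  [(1,(t.1,t.2.1,t.2.2)), (1,(t.2.1,t.2.2,t.1)), (1,(t.2.2,t.1,t.2.1)),
   (-1,(t.2.1,t.1,t.2.2)), (-1,(t.1,t.2.2,t.2.1)), (-1,(t.2.2,t.2.1,t.1))]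

def epsZ (a b c : Fin 8) : ℤ :=
  (((OmegaT.map signedPerms3Z).flatten).map (fun p => if p.2 = (a,b,c) then p.1 else 0)).sum

def mulCoefZ (a b d : Fin 8) : ℤ :=
  if a = 0 then (if d = b then 1 else 0)
  else if b = 0 then (if d = a then 1 else 0)
  else (if a = b ∧ d = 0 then -1 else 0) + epsZ a b d

theorem signedPerms3_eq_map :
    signedPerms3 = fun t => (signedPerms3Z t).map (Prod.map Int.cast id) := by
  funext t
  simp [signedPerms3, signedPerms3Z]

theorem eps_eq_intCast (a b c : Fin 8) : eps a b c = epsZ a b c := by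
  rw [eps, epsZ, signedPerms3_eq_map, Int.cast_list_sum]
  simp only [List.map_flatten, List.map_map, Function.comp_def]
  congr
  funext t
  congr
  funext p
  simp [apply_ite (Int.cast : ℤ → ℝ)]

theorem mulCoef_eq_intCast (a b d : Fin 8) : mulCoef a b d = mulCoefZ a b d := by
  simp only [mulCoef, mulCoefZ, eps_eq_intCast]
  split_ifs <;> simp

/-- The multiplication table of `𝕆`: `e a * e c = mulSign a c • e (mulIndex a c)`. -/
def mulIndex : Fin 8 → Fin 8 → Fin 8 :=
  ![![0, 1, 2, 3, 4, 5, 6, 7],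
    ![1, 0, 3, 2, 7, 6, 5, 4],
    ![2, 3, 0, 1, 6, 7, 4, 5],
    ![3, 2, 1, 0, 5, 4, 7, 6],
    ![4, 7, 6, 5, 0, 3, 2, 1],
    ![5, 6, 7, 4, 3, 0, 1, 2],
    ![6, 5, 4, 7, 2, 1, 0, 3],
    ![7, 4, 5, 6, 1, 2, 3, 0]]

def mulSign : Fin 8 → Fin 8 → ℤ :=
  ![![1, 1, 1, 1, 1, 1, 1, 1],
    ![1, -1, 1, -1, 1, -1, 1, -1],
    ![1, -1, -1, 1, 1, 1, -1, -1],
    ![1, 1, -1, -1, -1, 1, 1, -1],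
    ![1, -1, -1, 1, -1, -1, 1, 1],
    ![1, 1, -1, -1, 1, -1, -1, 1],
    ![1, -1, 1, -1, -1, 1, -1, 1],
    ![1, 1, 1, 1, -1, -1, -1, -1]]

theorem mulCoefZ_eq_ite (a c d : Fin 8) :
    mulCoefZ a c d = if d = mulIndex a c then mulSign a c else 0 := by
  revert a c d
  decide +kernel

theorem Imat_eq_monomial (a : Fin 8) :
    Imat a = monomial (mulIndex a) fun c => (mulSign a c : ℝ) := by
  ext d c
  simp [Imat, monomial, mulCoef_eq_intCast, mulCoefZ_eq_ite, apply_ite (Int.cast : ℤ → ℝ)]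

abbrev Word := {α : Fin 8 // α ≠ 0} ⊕ {p : Fin 8 × Fin 8 // p.1 ≠ 0 ∧ p.1 < p.2}

def Word.index : Word → Fin 8 → Fin 8 :=
  Sum.elim (fun α => mulIndex α) fun p => mulIndex p.1.1 ∘ mulIndex p.1.2

def Word.sign : Word → Fin 8 → ℤ :=
  Sum.elim (fun α => mulSign α) fun p c => mulSign p.1.1 (mulIndex p.1.2 c) * mulSign p.1.2 c

theorem Word.sum_sign_mul_sign (w v : Word) :
    (∑ c, if w.index c = v.index c then w.sign c * v.sign c else 0) = if w = v then 8 else 0 := by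
  revert w v
  decide +kernel

/-- The 28 matrices {I_α : 1 ≤ α ≤ 7} ∪ {I_α I_β : 1 ≤ α < β ≤ 7} are
linearly independent in M₈(ℝ). -/
theorem Imat_linearIndependent :
    LinearIndependent ℝ
      (Sum.elim (fun α : {α : Fin 8 // α ≠ 0} => Imat α.1)
        (fun p : {p : Fin 8 × Fin 8 // p.1 ≠ 0 ∧ p.1 < p.2} => Imat p.1.1 * Imat p.1.2)) := by
  have hmono : Sum.elim (fun α : {α : Fin 8 // α ≠ 0} => Imat α.1)
      (fun p : {p : Fin 8 × Fin 8 // p.1 ≠ 0 ∧ p.1 < p.2} => Imat p.1.1 * Imat p.1.2) =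
      fun w : Word => monomial w.index fun c => (w.sign c : ℝ) := by
    funext w
    rcases w with α | p
    · simp [Word.index, Word.sign, Imat_eq_monomial]
    · simp [Word.index, Word.sign, Imat_eq_monomial, monomial_mul_monomial]
  rw [hmono]
  exact linearIndependent_monomial (r := 8) (by norm_num) fun w v => by
    exact_mod_cast Word.sum_sign_mul_sign w v

end OC
end
end

section
/- The set 𝕆 × Im 𝕆 with the operation (x,t)·(y,s) = (x+y, t+s+2 Im(x ȳ)) is a group: the operation is associative, (0,0) is a two-sided identity, and (−x,−t) is a two-sided inverse of (x,t). -/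
open scoped BigOperators
open Matrix

noncomputable section

namespace OC

lemma mc_1_1 (d : Fin 8) : mulCoef 1 1 d = if d = 0 then -1 else 0 := by
  simp [mulCoef, eps, OmegaT, signedPerms3, Prod.ext_iff]

lemma mc_1_2 (d : Fin 8) : mulCoef 1 2 d = if (3:Fin 8) = d then 1 else 0 := by
  simp [mulCoef, eps, OmegaT, signedPerms3, Prod.ext_iff]

lemma mc_1_3 (d : Fin 8) : mulCoef 1 3 d = if (2:Fin 8) = d then -1 else 0 := by
  simp [mulCoef, eps, OmegaT, signedPerms3, Prod.ext_iff]

lemma mc_1_4 (d : Fin 8) : mulCoef 1 4 d = if (7:Fin 8) = d then 1 else 0 := by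
  simp [mulCoef, eps, OmegaT, signedPerms3, Prod.ext_iff]

lemma mc_1_5 (d : Fin 8) : mulCoef 1 5 d = if (6:Fin 8) = d then -1 else 0 := by
  simp [mulCoef, eps, OmegaT, signedPerms3, Prod.ext_iff]

lemma mc_1_6 (d : Fin 8) : mulCoef 1 6 d = if (5:Fin 8) = d then 1 else 0 := by
  simp [mulCoef, eps, OmegaT, signedPerms3, Prod.ext_iff]

lemma mc_1_7 (d : Fin 8) : mulCoef 1 7 d = if (4:Fin 8) = d then -1 else 0 := by
  simp [mulCoef, eps, OmegaT, signedPerms3, Prod.ext_iff]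

lemma mc_2_1 (d : Fin 8) : mulCoef 2 1 d = if (3:Fin 8) = d then -1 else 0 := by
  simp [mulCoef, eps, OmegaT, signedPerms3, Prod.ext_iff]

lemma mc_2_2 (d : Fin 8) : mulCoef 2 2 d = if d = 0 then -1 else 0 := by
  simp [mulCoef, eps, OmegaT, signedPerms3, Prod.ext_iff]

lemma mc_2_3 (d : Fin 8) : mulCoef 2 3 d = if (1:Fin 8) = d then 1 else 0 := by
  simp [mulCoef, eps, OmegaT, signedPerms3, Prod.ext_iff]

lemma mc_2_4 (d : Fin 8) : mulCoef 2 4 d = if (6:Fin 8) = d then 1 else 0 := by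
  simp [mulCoef, eps, OmegaT, signedPerms3, Prod.ext_iff]

lemma mc_2_5 (d : Fin 8) : mulCoef 2 5 d = if (7:Fin 8) = d then 1 else 0 := by
  simp [mulCoef, eps, OmegaT, signedPerms3, Prod.ext_iff]

lemma mc_2_6 (d : Fin 8) : mulCoef 2 6 d = if (4:Fin 8) = d then -1 else 0 := by
  simp [mulCoef, eps, OmegaT, signedPerms3, Prod.ext_iff]

lemma mc_2_7 (d : Fin 8) : mulCoef 2 7 d = if (5:Fin 8) = d then -1 else 0 := by
  simp [mulCoef, eps, OmegaT, signedPerms3, Prod.ext_iff]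

lemma mc_3_1 (d : Fin 8) : mulCoef 3 1 d = if (2:Fin 8) = d then 1 else 0 := by
  simp [mulCoef, eps, OmegaT, signedPerms3, Prod.ext_iff]

lemma mc_3_2 (d : Fin 8) : mulCoef 3 2 d = if (1:Fin 8) = d then -1 else 0 := by
  simp [mulCoef, eps, OmegaT, signedPerms3, Prod.ext_iff]

lemma mc_3_3 (d : Fin 8) : mulCoef 3 3 d = if d = 0 then -1 else 0 := by
  simp [mulCoef, eps, OmegaT, signedPerms3, Prod.ext_iff]

lemma mc_3_4 (d : Fin 8) : mulCoef 3 4 d = if (5:Fin 8) = d then -1 else 0 := by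
  simp [mulCoef, eps, OmegaT, signedPerms3, Prod.ext_iff]

lemma mc_3_5 (d : Fin 8) : mulCoef 3 5 d = if (4:Fin 8) = d then 1 else 0 := by
  simp [mulCoef, eps, OmegaT, signedPerms3, Prod.ext_iff]

lemma mc_3_6 (d : Fin 8) : mulCoef 3 6 d = if (7:Fin 8) = d then 1 else 0 := by
  simp [mulCoef, eps, OmegaT, signedPerms3, Prod.ext_iff]

lemma mc_3_7 (d : Fin 8) : mulCoef 3 7 d = if (6:Fin 8) = d then -1 else 0 := by
  simp [mulCoef, eps, OmegaT, signedPerms3, Prod.ext_iff]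

lemma mc_4_1 (d : Fin 8) : mulCoef 4 1 d = if (7:Fin 8) = d then -1 else 0 := by
  simp [mulCoef, eps, OmegaT, signedPerms3, Prod.ext_iff]

lemma mc_4_2 (d : Fin 8) : mulCoef 4 2 d = if (6:Fin 8) = d then -1 else 0 := by
  simp [mulCoef, eps, OmegaT, signedPerms3, Prod.ext_iff]

lemma mc_4_3 (d : Fin 8) : mulCoef 4 3 d = if (5:Fin 8) = d then 1 else 0 := by
  simp [mulCoef, eps, OmegaT, signedPerms3, Prod.ext_iff]

lemma mc_4_4 (d : Fin 8) : mulCoef 4 4 d = if d = 0 then -1 else 0 := by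
  simp [mulCoef, eps, OmegaT, signedPerms3, Prod.ext_iff]

lemma mc_4_5 (d : Fin 8) : mulCoef 4 5 d = if (3:Fin 8) = d then -1 else 0 := by
  simp [mulCoef, eps, OmegaT, signedPerms3, Prod.ext_iff]

lemma mc_4_6 (d : Fin 8) : mulCoef 4 6 d = if (2:Fin 8) = d then 1 else 0 := by
  simp [mulCoef, eps, OmegaT, signedPerms3, Prod.ext_iff]

lemma mc_4_7 (d : Fin 8) : mulCoef 4 7 d = if (1:Fin 8) = d then 1 else 0 := by
  simp [mulCoef, eps, OmegaT, signedPerms3, Prod.ext_iff]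

lemma mc_5_1 (d : Fin 8) : mulCoef 5 1 d = if (6:Fin 8) = d then 1 else 0 := by
  simp [mulCoef, eps, OmegaT, signedPerms3, Prod.ext_iff]

lemma mc_5_2 (d : Fin 8) : mulCoef 5 2 d = if (7:Fin 8) = d then -1 else 0 := by
  simp [mulCoef, eps, OmegaT, signedPerms3, Prod.ext_iff]

lemma mc_5_3 (d : Fin 8) : mulCoef 5 3 d = if (4:Fin 8) = d then -1 else 0 := by
  simp [mulCoef, eps, OmegaT, signedPerms3, Prod.ext_iff]

lemma mc_5_4 (d : Fin 8) : mulCoef 5 4 d = if (3:Fin 8) = d then 1 else 0 := by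
  simp [mulCoef, eps, OmegaT, signedPerms3, Prod.ext_iff]

lemma mc_5_5 (d : Fin 8) : mulCoef 5 5 d = if d = 0 then -1 else 0 := by
  simp [mulCoef, eps, OmegaT, signedPerms3, Prod.ext_iff]

lemma mc_5_6 (d : Fin 8) : mulCoef 5 6 d = if (1:Fin 8) = d then -1 else 0 := by
  simp [mulCoef, eps, OmegaT, signedPerms3, Prod.ext_iff]

lemma mc_5_7 (d : Fin 8) : mulCoef 5 7 d = if (2:Fin 8) = d then 1 else 0 := by
  simp [mulCoef, eps, OmegaT, signedPerms3, Prod.ext_iff]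

lemma mc_6_1 (d : Fin 8) : mulCoef 6 1 d = if (5:Fin 8) = d then -1 else 0 := by
  simp [mulCoef, eps, OmegaT, signedPerms3, Prod.ext_iff]

lemma mc_6_2 (d : Fin 8) : mulCoef 6 2 d = if (4:Fin 8) = d then 1 else 0 := by
  simp [mulCoef, eps, OmegaT, signedPerms3, Prod.ext_iff]

lemma mc_6_3 (d : Fin 8) : mulCoef 6 3 d = if (7:Fin 8) = d then -1 else 0 := by
  simp [mulCoef, eps, OmegaT, signedPerms3, Prod.ext_iff]

lemma mc_6_4 (d : Fin 8) : mulCoef 6 4 d = if (2:Fin 8) = d then -1 else 0 := by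
  simp [mulCoef, eps, OmegaT, signedPerms3, Prod.ext_iff]

lemma mc_6_5 (d : Fin 8) : mulCoef 6 5 d = if (1:Fin 8) = d then 1 else 0 := by
  simp [mulCoef, eps, OmegaT, signedPerms3, Prod.ext_iff]

lemma mc_6_6 (d : Fin 8) : mulCoef 6 6 d = if d = 0 then -1 else 0 := by
  simp [mulCoef, eps, OmegaT, signedPerms3, Prod.ext_iff]

lemma mc_6_7 (d : Fin 8) : mulCoef 6 7 d = if (3:Fin 8) = d then 1 else 0 := by
  simp [mulCoef, eps, OmegaT, signedPerms3, Prod.ext_iff]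

lemma mc_7_1 (d : Fin 8) : mulCoef 7 1 d = if (4:Fin 8) = d then 1 else 0 := by
  simp [mulCoef, eps, OmegaT, signedPerms3, Prod.ext_iff]

lemma mc_7_2 (d : Fin 8) : mulCoef 7 2 d = if (5:Fin 8) = d then 1 else 0 := by
  simp [mulCoef, eps, OmegaT, signedPerms3, Prod.ext_iff]

lemma mc_7_3 (d : Fin 8) : mulCoef 7 3 d = if (6:Fin 8) = d then 1 else 0 := by
  simp [mulCoef, eps, OmegaT, signedPerms3, Prod.ext_iff]

lemma mc_7_4 (d : Fin 8) : mulCoef 7 4 d = if (1:Fin 8) = d then -1 else 0 := by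
  simp [mulCoef, eps, OmegaT, signedPerms3, Prod.ext_iff]

lemma mc_7_5 (d : Fin 8) : mulCoef 7 5 d = if (2:Fin 8) = d then -1 else 0 := by
  simp [mulCoef, eps, OmegaT, signedPerms3, Prod.ext_iff]

lemma mc_7_6 (d : Fin 8) : mulCoef 7 6 d = if (3:Fin 8) = d then -1 else 0 := by
  simp [mulCoef, eps, OmegaT, signedPerms3, Prod.ext_iff]

lemma mc_7_7 (d : Fin 8) : mulCoef 7 7 d = if d = 0 then -1 else 0 := by
  simp [mulCoef, eps, OmegaT, signedPerms3, Prod.ext_iff]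

lemma mc_0_0 (d : Fin 8) : mulCoef 0 0 d = if d = 0 then 1 else 0 := by
  simp [mulCoef]

lemma mc_0_1 (d : Fin 8) : mulCoef 0 1 d = if d = 1 then 1 else 0 := by
  simp [mulCoef]

lemma mc_0_2 (d : Fin 8) : mulCoef 0 2 d = if d = 2 then 1 else 0 := by
  simp [mulCoef]

lemma mc_0_3 (d : Fin 8) : mulCoef 0 3 d = if d = 3 then 1 else 0 := by
  simp [mulCoef]

lemma mc_0_4 (d : Fin 8) : mulCoef 0 4 d = if d = 4 then 1 else 0 := by
  simp [mulCoef]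

lemma mc_0_5 (d : Fin 8) : mulCoef 0 5 d = if d = 5 then 1 else 0 := by
  simp [mulCoef]

lemma mc_0_6 (d : Fin 8) : mulCoef 0 6 d = if d = 6 then 1 else 0 := by
  simp [mulCoef]

lemma mc_0_7 (d : Fin 8) : mulCoef 0 7 d = if d = 7 then 1 else 0 := by
  simp [mulCoef]

lemma mc_1_0 (d : Fin 8) : mulCoef 1 0 d = if d = 1 then 1 else 0 := by
  simp [mulCoef, eps, OmegaT, signedPerms3, Prod.ext_iff]

lemma mc_2_0 (d : Fin 8) : mulCoef 2 0 d = if d = 2 then 1 else 0 := by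
  simp [mulCoef, eps, OmegaT, signedPerms3, Prod.ext_iff]

lemma mc_3_0 (d : Fin 8) : mulCoef 3 0 d = if d = 3 then 1 else 0 := by
  simp [mulCoef, eps, OmegaT, signedPerms3, Prod.ext_iff]

lemma mc_4_0 (d : Fin 8) : mulCoef 4 0 d = if d = 4 then 1 else 0 := by
  simp [mulCoef, eps, OmegaT, signedPerms3, Prod.ext_iff]

lemma mc_5_0 (d : Fin 8) : mulCoef 5 0 d = if d = 5 then 1 else 0 := by
  simp [mulCoef, eps, OmegaT, signedPerms3, Prod.ext_iff]

lemma mc_6_0 (d : Fin 8) : mulCoef 6 0 d = if d = 6 then 1 else 0 := by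
  simp [mulCoef, eps, OmegaT, signedPerms3, Prod.ext_iff]

lemma mc_7_0 (d : Fin 8) : mulCoef 7 0 d = if d = 7 then 1 else 0 := by
  simp [mulCoef, eps, OmegaT, signedPerms3, Prod.ext_iff]


lemma omul_add_left (x y z : Octo) : omul (x + y) z = omul x z + omul y z := by
  funext d
  simp only [omul, Pi.add_apply]
  rw [← Finset.sum_add_distrib]
  refine Finset.sum_congr rfl fun a _ => ?_
  rw [← Finset.sum_add_distrib]
  refine Finset.sum_congr rfl fun b _ => ?_
  ring

lemma omul_add_right (x y z : Octo) : omul x (y + z) = omul x y + omul x z := by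
  funext d
  simp only [omul, Pi.add_apply]
  rw [← Finset.sum_add_distrib]
  refine Finset.sum_congr rfl fun a _ => ?_
  rw [← Finset.sum_add_distrib]
  refine Finset.sum_congr rfl fun b _ => ?_
  ring

lemma omul_neg_right (x y : Octo) : omul x (-y) = -(omul x y) := by
  funext d
  simp only [omul, Pi.neg_apply, mul_neg, neg_mul, Finset.sum_neg_distrib]

lemma omul_neg_left (x y : Octo) : omul (-x) y = -(omul x y) := by
  funext d
  simp only [omul, Pi.neg_apply, mul_neg, neg_mul, Finset.sum_neg_distrib]

lemma omul_zero_left (z : Octo) : omul (0 : Octo) z = 0 := by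
  funext d; simp [omul]

lemma omul_zero_right (z : Octo) : omul z (0 : Octo) = 0 := by
  funext d; simp [omul]

lemma conjO_add (x y : Octo) : conjO (x + y) = conjO x + conjO y := by
  funext d; simp only [conjO, Pi.add_apply]; split <;> ring

lemma conjO_neg (x : Octo) : conjO (-x) = -(conjO x) := by
  funext d; simp only [conjO, Pi.neg_apply]; split <;> ring

lemma conjO_zero : conjO (0 : Octo) = 0 := by
  funext d; simp [conjO]

lemma imO_add (x y : Octo) : imO (x + y) = imO x + imO y := by
  funext d; simp only [imO, Pi.add_apply]; split <;> ring

lemma imO_zero : imO (0 : Octo) = 0 := by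
  funext d; simp [imO]

lemma imO_neg (x : Octo) : imO (-x) = -(imO x) := by
  funext d; simp only [imO, Pi.neg_apply]; split <;> ring

set_option maxHeartbeats 4000000 in
lemma omul_conj_self_imag (x : Octo) (d : Fin 8) (hd : d ≠ 0) :
    omul x (conjO x) d = 0 := by
  fin_cases d
  · exact absurd rfl hd
  all_goals
    simp only [omul, Fin.sum_univ_eight, conjO, mc_0_0, mc_0_1, mc_0_2, mc_0_3, mc_0_4, mc_0_5, mc_0_6, mc_0_7, mc_1_0, mc_1_1, mc_1_2, mc_1_3, mc_1_4, mc_1_5, mc_1_6, mc_1_7, mc_2_0, mc_2_1, mc_2_2, mc_2_3, mc_2_4, mc_2_5, mc_2_6, mc_2_7, mc_3_0, mc_3_1, mc_3_2, mc_3_3, mc_3_4, mc_3_5, mc_3_6, mc_3_7, mc_4_0, mc_4_1, mc_4_2, mc_4_3, mc_4_4, mc_4_5, mc_4_6, mc_4_7, mc_5_0, mc_5_1, mc_5_2, mc_5_3, mc_5_4, mc_5_5, mc_5_6, mc_5_7, mc_6_0, mc_6_1, mc_6_2, mc_6_3, mc_6_4, mc_6_5, mc_6_6, mc_6_7, mc_7_0,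 mc_7_1, mc_7_2, mc_7_3, mc_7_4, mc_7_5, mc_7_6, mc_7_7]
    simp
    ring

lemma imO_omul_conj_self (x : Octo) : imO (omul x (conjO x)) = 0 := by
  funext d
  simp only [imO, Pi.zero_apply]
  split
  · rfl
  · rename_i hd
    exact omul_conj_self_imag x d hd

/-- 𝕆 × Im 𝕆 with (x,t)·(y,s) = (x+y, t+s+2 Im(x ȳ)) is a group: the
operation is closed and associative, (0,0) is a two-sided identity, and (−x,−t) is a
two-sided inverse of (x,t). -/
theorem heisenberg_group_laws :
    (∀ p q : Octo × Octo, p.2 0 = 0 → q.2 0 = 0 → (hmul p q).2 0 = 0) ∧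
    (∀ p q r : Octo × Octo, p.2 0 = 0 → q.2 0 = 0 → r.2 0 = 0 →
      hmul (hmul p q) r = hmul p (hmul q r)) ∧
    (∀ p : Octo × Octo, p.2 0 = 0 →
      hmul ((0 : Octo), (0 : Octo)) p = p ∧ hmul p ((0 : Octo), (0 : Octo)) = p) ∧
    (∀ p : Octo × Octo, p.2 0 = 0 →
      hmul p (-p.1, -p.2) = ((0 : Octo), (0 : Octo)) ∧
      hmul (-p.1, -p.2) p = ((0 : Octo), (0 : Octo))) := by
  refine ⟨?_, ?_, ?_, ?_⟩
  · intro p q hp hq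
    simp [hmul, imO, hp, hq]
  · intro p q r _ _ _
    simp only [hmul, Prod.mk.injEq]
    constructor
    · funext d; simp [add_assoc]
    · rw [conjO_add, omul_add_left, omul_add_right, imO_add, imO_add]
      funext d; simp only [Pi.add_apply, Pi.smul_apply, smul_eq_mul]; ring
  · intro p _
    constructor <;>
      · refine Prod.ext ?_ ?_ <;>
          simp [hmul, omul_zero_left, omul_zero_right, conjO_zero, imO_zero]
  · intro p _
    have h1 : imO (omul p.1 (conjO (-p.1))) = 0 := by
      rw [conjO_neg, omul_neg_right, imO_neg, imO_omul_conj_self, neg_zero]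
    have h2 : imO (omul (-p.1) (conjO p.1)) = 0 := by
      rw [omul_neg_left, imO_neg, imO_omul_conj_self, neg_zero]
    constructor
    · simp only [hmul, h1, smul_zero, Prod.mk.injEq]
      exact ⟨by funext d; simp, by funext d; simp⟩
    · simp only [hmul, h2, smul_zero, Prod.mk.injEq]
      exact ⟨by funext d; simp, by funext d; simp⟩

end OC
end
end

section
/- For every (x,t) ∈ ℋ with (x,t) ≠ (0,0), the homogeneous norm satisfies ‖R(x,t)‖ = 1/‖(x,t)‖. -/
open scoped BigOperators
open Matrix

noncomputable section

namespace OC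

/-! With ρ = |x|⁴ + |t|², the octonion q = |x|²e₀ − t has |q|² = ρ because t is purely imaginary.
The octonion norm is multiplicative, so the first component of R(x,t) has squared norm |x|²/ρ,
and the second has squared norm |t|²/ρ²; hence |R(x,t)|⁴ = (|x|⁴ + |t|²)/ρ² = 1/ρ. -/

lemma inv_sq_mul_self {G₀ : Type*} [CommGroupWithZero G₀] (a : G₀) : a⁻¹ ^ 2 * a = a⁻¹ := by
  simpa [sq, mul_right_comm] using mul_inv_mul_cancel a⁻¹

lemma normSq_nonneg (z : Octo) : 0 ≤ normSq z :=
  Finset.sum_nonneg fun a _ => sq_nonneg (z a)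

lemma normSq_neg (z : Octo) : normSq (-z) = normSq z := by
  simp [normSq]

lemma normSq_smul (c : ℝ) (z : Octo) : normSq (c • z) = c ^ 2 * normSq z := by
  simp only [normSq, Pi.smul_apply, smul_eq_mul, mul_pow, Finset.mul_sum]

lemma normSq_conjO (z : Octo) : normSq (conjO z) = normSq z :=
  Finset.sum_congr rfl fun a _ => by unfold conjO; split_ifs with h <;> simp [h]

set_option maxHeartbeats 1000000 in
/-- Degen's eight-square identity: once `ε` is expanded, both sides are explicit
polynomials in the sixteen coordinates. -/
lemma normSq_omul (x y : Octo) : normSq (omul x y) = normSq x * normSq y := by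
  simp only [normSq, omul, Fin.sum_univ_eight]
  simp +decide [mulCoef, eps, OmegaT, signedPerms3]
  ring

lemma normSq_oinv (z : Octo) : normSq (oinv z) = (normSq z)⁻¹ := by
  rw [oinv, normSq_smul, normSq_conjO, inv_sq_mul_self]

lemma normSq_smul_e_zero_sub {t : Octo} (ht : t 0 = 0) (c : ℝ) :
    normSq (c • e 0 - t) = c ^ 2 + normSq t := by
  simp only [normSq, Fin.sum_univ_succ (n := 7), Pi.sub_apply, Pi.smul_apply, smul_eq_mul, e, ht]
  simp

lemma normSq_Rmap_fst (p : Octo × Octo) (him : p.2 0 = 0) :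
    normSq (Rmap p).1 = ((normSq p.1) ^ 2 + normSq p.2)⁻¹ * normSq p.1 := by
  rw [Rmap, normSq_neg, normSq_omul, normSq_oinv, normSq_smul_e_zero_sub him]

lemma normSq_Rmap_snd (p : Octo × Octo) :
    normSq (Rmap p).2 = ((normSq p.1) ^ 2 + normSq p.2)⁻¹ ^ 2 * normSq p.2 := by
  rw [Rmap, normSq_neg, normSq_smul]

theorem hnorm_Rmap_general (p : Octo × Octo) (him : p.2 0 = 0) :
    hnorm (Rmap p) = (hnorm p)⁻¹ := by
  have hquartic : (normSq (Rmap p).1) ^ 2 + normSq (Rmap p).2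
      = ((normSq p.1) ^ 2 + normSq p.2)⁻¹ := by
    rw [normSq_Rmap_fst p him, normSq_Rmap_snd, mul_pow, ← mul_add, inv_sq_mul_self]
  rw [hnorm, hnorm, hquartic, Real.inv_rpow (add_nonneg (sq_nonneg _) (normSq_nonneg _))]

/-- ‖R(x,t)‖ = 1/‖(x,t)‖ for (x,t) ≠ (0,0). -/
theorem hnorm_Rmap (p : Octo × Octo) (hp : p ≠ 0) (him : p.2 0 = 0) :
    hnorm (Rmap p) = (hnorm p)⁻¹ :=
  hnorm_Rmap_general p him

end OC
end
end

section
/- Let ρ : ℝ⁸ × ℝ⁷ → ℝ be ρ(x,t) = |x|⁴ + |t|², where |x|² = Σ_{a=0}^{7} x_a² and |t|² = Σ_{β=1}^{7} t_β². Then Σ_{a=0}^{7} X_a(X_a ρ)(x,t) = 96 |x|² for all (x,t); equivalently, the SubLaplacian Δ₀ = −Σ_{a=0}^{7} X_a X_a satisfies Δ₀ρ = −4(Q+2)|x|² with homogeneous dimension Q = 22. -/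
open scoped BigOperators
open Matrix

noncomputable section

namespace OC

abbrev H : Type := (Fin 8 → ℝ) × (Fin 7 → ℝ)

def PX (a : Fin 8) : H →L[ℝ] ℝ :=
  (ContinuousLinearMap.proj a).comp (ContinuousLinearMap.fst ℝ (Fin 8 → ℝ) (Fin 7 → ℝ))
def PT (β : Fin 7) : H →L[ℝ] ℝ :=
  (ContinuousLinearMap.proj β).comp (ContinuousLinearMap.snd ℝ (Fin 8 → ℝ) (Fin 7 → ℝ))

lemma hx (a : Fin 8) (p : H) : HasFDerivAt (fun q : H => q.1 a) (PX a) p :=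
  (PX a).hasFDerivAt
lemma ht (β : Fin 7) (p : H) : HasFDerivAt (fun q : H => q.2 β) (PT β) p :=
  (PT β).hasFDerivAt

lemma hpow2 {f : H → ℝ} {f' : H →L[ℝ] ℝ} {p : H} (h : HasFDerivAt f f' p) :
    HasFDerivAt (fun q => (f q)^2) ((2 * f p) • f') p := by
  simp only [pow_two]
  have := h.mul h
  rwa [two_mul, add_smul]

lemma hS (p : H) : HasFDerivAt (fun q : H => ∑ c, (q.1 c)^2)
    (∑ c, ((2:ℝ) * p.1 c) • PX c) p :=
  HasFDerivAt.sum (fun c (_ : c ∈ Finset.univ) => hpow2 (hx c p))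

lemma hrho (p : H) : HasFDerivAt rho
    (((2:ℝ) * (∑ c, (p.1 c)^2)) • (∑ c, ((2:ℝ) * p.1 c) • PX c)
      + ∑ β, ((2:ℝ) * p.2 β) • PT β) p :=
  (hpow2 (hS p)).add (HasFDerivAt.sum (fun β (_ : β ∈ Finset.univ) => hpow2 (ht β p)))

lemma Xop_rho (a : Fin 8) (p : H) :
    Xop a rho p = 4 * (∑ c, (p.1 c)^2) * p.1 a
      + ∑ β, ∑ b, (4 * E7 β b a) * (p.1 b * p.2 β) := by
  rw [Xop, (hrho p).fderiv]
  simp [PX, PT, Pi.single_apply, Finset.mul_sum]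
  congr 1
  · rw [Finset.sum_mul, Finset.sum_mul]
    exact Finset.sum_congr rfl fun i _ => by ring
  · exact Finset.sum_congr rfl fun β _ => Finset.sum_congr rfl fun b _ => by ring

def g (a : Fin 8) (p : H) : ℝ :=
  4 * (∑ c, (p.1 c)^2) * p.1 a + ∑ β, ∑ b, (4 * E7 β b a) * (p.1 b * p.2 β)

lemma fs0 : (Fin.succ 0 : Fin 8) = 1 := rfl
lemma fs1 : (Fin.succ 1 : Fin 8) = 2 := rfl
lemma fs2 : (Fin.succ 2 : Fin 8) = 3 := rfl
lemma fs3 : (Fin.succ 3 : Fin 8) = 4 := rfl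
lemma fs4 : (Fin.succ 4 : Fin 8) = 5 := rfl
lemma fs5 : (Fin.succ 5 : Fin 8) = 6 := rfl
lemma fs6 : (Fin.succ 6 : Fin 8) = 7 := rfl

lemma Xop_g (a : Fin 8) (p : H) :
    Xop a (g a) p = 4 * (∑ c, (p.1 c)^2) + 8 * (p.1 a)^2
      + (∑ β, 4 * E7 β a a * p.2 β)
      + 8 * ∑ β, (∑ b, E7 β b a * p.1 b)^2 := by
  have h1 := ((hS p).const_mul (4:ℝ)).mul (hx a p)
  have h2 := HasFDerivAt.sum (fun β (_ : β ∈ Finset.univ) => HasFDerivAt.sum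
    (fun b (_ : b ∈ Finset.univ) => ((hx b p).mul (ht β p)).const_mul ((4:ℝ) * E7 β b a)))
  have h : HasFDerivAt (g a) _ p := h1.add h2
  rw [Xop, h.fderiv]
  simp [PX, PT, Pi.single_apply, Finset.mul_sum]
  congr 1
  · congr 1
    congr 1
    ring
  · refine Finset.sum_congr rfl fun β _ => ?_
    rw [pow_two, Finset.sum_mul_sum, Finset.mul_sum]
    refine Finset.sum_congr rfl fun b _ => ?_
    rw [Finset.mul_sum]
    exact Finset.sum_congr rfl fun c _ => by ring

set_option maxHeartbeats 2000000 in
lemma E7_diag (β : Fin 7) (a : Fin 8) : E7 β a a = 0 := by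
  fin_cases β <;> fin_cases a <;>
    simp (config := { decide := true }) [E7, Imat, mulCoef, eps, OmegaT, signedPerms3,
      fs0, fs1, fs2, fs3, fs4, fs5, fs6]

set_option maxHeartbeats 2000000 in
lemma E7_orth (β : Fin 7) (x : Fin 8 → ℝ) :
    ∑ a, (∑ b, E7 β b a * x b)^2 = ∑ b, (x b)^2 := by
  fin_cases β <;>
    (simp (config := { decide := true }) [Fin.sum_univ_eight, E7, Imat, mulCoef, eps,
      OmegaT, signedPerms3, fs0, fs1, fs2, fs3, fs4, fs5, fs6]; ring)


/-- Σ_a X_a(X_a ρ) = 96 |x|², i.e. Δ₀ρ = −4(Q+2)|x|² with Q = 22. -/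
theorem subLaplacian_rho (p : (Fin 8 → ℝ) × (Fin 7 → ℝ)) :
    ∑ a : Fin 8, Xop a (Xop a rho) p = 96 * ∑ c, (p.1 c)^2 := by
  have hgr : ∀ a : Fin 8, Xop a rho = g a := fun a => funext (Xop_rho a)
  have key : ∀ a : Fin 8, Xop a (Xop a rho) p = 4 * (∑ c, (p.1 c)^2) + 8 * (p.1 a)^2
      + 8 * ∑ β, (∑ b, E7 β b a * p.1 b)^2 := by
    intro a
    rw [hgr a, Xop_g]
    simp [E7_diag]
  calc ∑ a : Fin 8, Xop a (Xop a rho) p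
      = ∑ a : Fin 8, (4 * (∑ c, (p.1 c)^2) + 8 * (p.1 a)^2
          + 8 * ∑ β, (∑ b, E7 β b a * p.1 b)^2) := Finset.sum_congr rfl fun a _ => key a
    _ = 96 * ∑ c, (p.1 c)^2 := by
        rw [Finset.sum_add_distrib, Finset.sum_add_distrib]
        have h4 : ∑ a : Fin 8, 8 * ∑ β, (∑ b, E7 β b a * p.1 b)^2
            = 8 * ∑ β : Fin 7, ∑ a, (∑ b, E7 β b a * p.1 b)^2 := by
          rw [← Finset.mul_sum, Finset.sum_comm]
        rw [h4]
        simp only [E7_orth, Finset.sum_const, Finset.card_univ, Fintype.card_fin,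
          nsmul_eq_mul, Nat.cast_ofNat]
        rw [← Finset.mul_sum]
        ring


end OC
end
end
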